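/- arXiv:1505.04884 — 2 statements merged into one kernel-verified Lean document; each statement's English description precedes it below -/
import Mathlib

section
/- The kernel of τ₂ has dimension (4n³ + 9n² + 5n)/6; precisely, the subspace of pairs (B_Γ, B_C), where B_Γ : V × V × V → ℝ is trilinear with B_Γ(X,Y,Z) = −B_Γ(X,Z,Y) for all X, Y, Z and B_Γ(X,Y,Z) = 0 whenever Y or Z lies in the vertical subspace {0} × (Fin n → ℝ), and B_C is a symmetric bilinear form on V, satisfying for all X, Y, Z ∈ V: (i) B_Γ(P_h X, Y, Z) + B_Γ(P_h Y, Z, X) + B_Γ(P_h Z, X, Y) = 0; (ii) B_Γ(J X, Y, Z) + B_Γ(J Y, Z, X) + B_Γ(J Z, X, Y) = 0; (iii) (1/2)·B_Γ(C, X, Y) − B_C(P_h X, J Y) + B_C(P_h Y, J X) = 0, has dimension (4n³ + 9n² + 5n)/6. -/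
set_option synthInstance.maxHeartbeats 1000000
set_option maxHeartbeats 1000000

noncomputable section

/-- The pointwise model `V = (Fin n → ℝ) × (Fin n → ℝ)` of the double tangent space
`T_x(TM)` for a spray on an `n`-dimensional manifold, in an adapted basis. -/
abbrev V (n : ℕ) : Type := (Fin n → ℝ) × (Fin n → ℝ)

/-- The vertical endomorphism `J (x, y) = (0, x)`. -/
def Jmap (n : ℕ) : V n →ₗ[ℝ] V n where
  toFun p := (0, p.1)
  map_add' a b := by simp
  map_smul' c a := by simp

/-- The horizontal projector `P_h (x, y) = (x, 0)`. -/
def Ph (n : ℕ) : V n →ₗ[ℝ] V n where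
  toFun p := (p.1, 0)
  map_add' a b := by simp
  map_smul' c a := by simp

/-- The `j`-th standard basis vector of `Fin n → ℝ`, indexed by `1 ≤ j ≤ n`
(zero if `j` is out of range). -/
def dlt (n j : ℕ) : Fin n → ℝ := fun i => if (i : ℕ) + 1 = j then 1 else 0

/-- The horizontal basis vector `h_j`, `1 ≤ j ≤ n`. -/
def hvec (n j : ℕ) : V n := (dlt n j, 0)

/-- The vertical basis vector `v_j`, `1 ≤ j ≤ n`. -/
def vvec (n j : ℕ) : V n := (0, dlt n j)

/-- The spray vector `S = h_n`. -/
def Svec (n : ℕ) : V n := hvec n n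

/-- The Liouville vector `C = v_n = J S`. -/
def Cvec (n : ℕ) : V n := vvec n n

/-- Bilinear forms on `V n`. -/
abbrev Bil (n : ℕ) := V n →ₗ[ℝ] V n →ₗ[ℝ] ℝ

/-- Trilinear forms on `V n` (bundled). -/
abbrev Tri (n : ℕ) := V n →ₗ[ℝ] V n →ₗ[ℝ] V n →ₗ[ℝ] ℝ

/-- Trilinearity of a function `A : V × V × V → ℝ`. -/
def IsTrilin (n : ℕ) (A : V n → V n → V n → ℝ) : Prop :=
  (∀ X X' Y Z, A (X + X') Y Z = A X Y Z + A X' Y Z) ∧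
  (∀ (c : ℝ) X Y Z, A (c • X) Y Z = c * A X Y Z) ∧
  (∀ X Y Y' Z, A X (Y + Y') Z = A X Y Z + A X Y' Z) ∧
  (∀ (c : ℝ) X Y Z, A X (c • Y) Z = c * A X Y Z) ∧
  (∀ X Y Z Z', A X Y (Z + Z') = A X Y Z + A X Y Z') ∧
  (∀ (c : ℝ) X Y Z, A X Y (c • Z) = c * A X Y Z)

theorem IsTrilin.add {n : ℕ} {a b : V n → V n → V n → ℝ}
    (ha : IsTrilin n a) (hb : IsTrilin n b) : IsTrilin n (a + b) := by
  obtain ⟨ha1, ha2, ha3, ha4, ha5, ha6⟩ := ha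
  obtain ⟨hb1, hb2, hb3, hb4, hb5, hb6⟩ := hb
  refine ⟨fun X X' Y Z => ?_, fun c X Y Z => ?_, fun X Y Y' Z => ?_,
    fun c X Y Z => ?_, fun X Y Z Z' => ?_, fun c X Y Z => ?_⟩ <;>
      simp only [Pi.add_apply]
  · linear_combination ha1 X X' Y Z + hb1 X X' Y Z
  · linear_combination ha2 c X Y Z + hb2 c X Y Z
  · linear_combination ha3 X Y Y' Z + hb3 X Y Y' Z
  · linear_combination ha4 c X Y Z + hb4 c X Y Z
  · linear_combination ha5 X Y Z Z' + hb5 X Y Z Z'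
  · linear_combination ha6 c X Y Z + hb6 c X Y Z

theorem IsTrilin.smul {n : ℕ} (c : ℝ) {a : V n → V n → V n → ℝ}
    (ha : IsTrilin n a) : IsTrilin n (c • a) := by
  obtain ⟨ha1, ha2, ha3, ha4, ha5, ha6⟩ := ha
  refine ⟨fun X X' Y Z => ?_, fun d X Y Z => ?_, fun X Y Y' Z => ?_,
    fun d X Y Z => ?_, fun X Y Z Z' => ?_, fun d X Y Z => ?_⟩ <;>
      simp only [Pi.smul_apply, smul_eq_mul]
  · linear_combination c * ha1 X X' Y Z
  · linear_combination c * ha2 d X Y Z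
  · linear_combination c * ha3 X Y Y' Z
  · linear_combination c * ha4 d X Y Z
  · linear_combination c * ha5 X Y Z Z'
  · linear_combination c * ha6 d X Y Z

theorem IsTrilin.zero (n : ℕ) : IsTrilin n (0 : V n → V n → V n → ℝ) := by
  refine ⟨fun X X' Y Z => by simp, fun c X Y Z => by simp, fun X Y Y' Z => by simp,
    fun c X Y Z => by simp, fun X Y Z Z' => by simp, fun c X Y Z => by simp⟩

/-- The kernel of `τ₂`: pairs `(B_Γ, B_C)` with `B_Γ` trilinear, antisymmetric and
semibasic in its last two arguments, and `B_C` symmetric bilinear, satisfying the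
three equations `τ¹_Γ = τ²_Γ = τ_{ΓC} = 0`. -/
def kerTau2 (n : ℕ) : Submodule ℝ ((V n → V n → V n → ℝ) × Bil n) where
  carrier := {B | IsTrilin n B.1 ∧
    (∀ X Y Z, B.1 X Y Z = - B.1 X Z Y) ∧
    (∀ X (y : Fin n → ℝ) Z, B.1 X (0, y) Z = 0) ∧
    (∀ X Y (z : Fin n → ℝ), B.1 X Y (0, z) = 0) ∧
    (∀ X Y, B.2 X Y = B.2 Y X) ∧
    (∀ X Y Z, B.1 (Ph n X) Y Z + B.1 (Ph n Y) Z X + B.1 (Ph n Z) X Y = 0) ∧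
    (∀ X Y Z, B.1 (Jmap n X) Y Z + B.1 (Jmap n Y) Z X + B.1 (Jmap n Z) X Y = 0) ∧
    (∀ X Y, (1 / 2 : ℝ) * B.1 (Cvec n) X Y
      - B.2 (Ph n X) (Jmap n Y) + B.2 (Ph n Y) (Jmap n X) = 0)}
  add_mem' := by
    rintro a b ⟨haT, ha1, ha2, ha3, ha4, ha5, ha6, ha7⟩
      ⟨hbT, hb1, hb2, hb3, hb4, hb5, hb6, hb7⟩
    refine ⟨haT.add hbT, fun X Y Z => ?_, fun X y Z => ?_, fun X Y z => ?_,
      fun X Y => ?_, fun X Y Z => ?_, fun X Y Z => ?_, fun X Y => ?_⟩ <;>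
      simp only [Prod.fst_add, Prod.snd_add, Pi.add_apply, LinearMap.add_apply]
    · linear_combination ha1 X Y Z + hb1 X Y Z
    · linear_combination ha2 X y Z + hb2 X y Z
    · linear_combination ha3 X Y z + hb3 X Y z
    · linear_combination ha4 X Y + hb4 X Y
    · linear_combination ha5 X Y Z + hb5 X Y Z
    · linear_combination ha6 X Y Z + hb6 X Y Z
    · linear_combination ha7 X Y + hb7 X Y
  zero_mem' := ⟨IsTrilin.zero n, fun X Y Z => by simp, fun X y Z => by simp,
    fun X Y z => by simp, fun X Y => by simp, fun X Y Z => by simp,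
    fun X Y Z => by simp, fun X Y => by simp⟩
  smul_mem' := by
    rintro c a ⟨haT, ha1, ha2, ha3, ha4, ha5, ha6, ha7⟩
    refine ⟨haT.smul c, fun X Y Z => ?_, fun X y Z => ?_, fun X Y z => ?_,
      fun X Y => ?_, fun X Y Z => ?_, fun X Y Z => ?_, fun X Y => ?_⟩ <;>
      simp only [Prod.smul_fst, Prod.smul_snd, Pi.smul_apply, LinearMap.smul_apply,
        smul_eq_mul]
    · linear_combination c * ha1 X Y Z
    · linear_combination c * ha2 X y Z
    · linear_combination c * ha3 X Y z
    · linear_combination c * ha4 X Y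
    · linear_combination c * ha5 X Y Z
    · linear_combination c * ha6 X Y Z
    · linear_combination c * ha7 X Y

/-
The conditions on `B_Γ` only involve its horizontal part `T_h(x, y, z) = B_Γ((x,0), (y,0), (z,0))`
and its vertical part `T_v(x, y, z) = B_Γ((0,x), (y,0), (z,0))`, which determine it because it is
semibasic. Conditions (i) and (ii) say that both lie in the space `K` of trilinear forms that are
antisymmetric in the last two arguments and have vanishing cyclic sum, and condition (iii) fixes
the antisymmetric part of the mixed block of `B_C` in terms of `T_v(e_n, ·, ·)`. Subtracting an
explicit symmetric form with that mixed block identifies `ker τ₂` with `K × K × S`, where `S`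
consists of the symmetric forms on `V` with symmetric mixed block, so `dim S = 3 · n(n+1)/2`.
Finally `K` is the image of the tensors symmetric in their first two indices under
antisymmetrization in the last two, with kernel the totally symmetric tensors, so
`dim K = n · n(n+1)/2 - n(n+1)(n+2)/6 = (n³ - n)/3`.
-/

open Module

section Tensors

variable (𝕜 : Type*) [Field 𝕜] (ι : Type*)

def symPairs (M : Type*) [AddCommGroup M] [Module 𝕜 M] : Submodule 𝕜 (ι → ι → M) where
  carrier := {f | ∀ i j, f i j = f j i}
  add_mem' hf hg i j := by simp only [Pi.add_apply, hf i j, hg i j]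
  zero_mem' _ _ := rfl
  smul_mem' c f hf i j := by simp only [Pi.smul_apply, hf i j]

def symPairsEquivSym2 (M : Type*) [AddCommGroup M] [Module 𝕜 M] :
    symPairs 𝕜 ι M ≃ₗ[𝕜] (Sym2 ι → M) where
  toFun f := Sym2.lift ⟨f, f.2⟩
  map_add' f g := by ext ⟨i, j⟩; rfl
  map_smul' c f := by ext ⟨i, j⟩; rfl
  invFun g := ⟨fun i j => g s(i, j), fun i j => congrArg g Sym2.eq_swap⟩
  left_inv f := rfl
  right_inv g := by ext ⟨i, j⟩; rfl

theorem finrank_symPairs [Fintype ι] (M : Type*) [AddCommGroup M] [Module 𝕜 M]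
    [FiniteDimensional 𝕜 M] :
    finrank 𝕜 (symPairs 𝕜 ι M) = (Fintype.card ι + 1).choose 2 * finrank 𝕜 M := by
  rw [(symPairsEquivSym2 𝕜 ι M).finrank_eq, Module.finrank_pi_fintype, Finset.sum_const,
    smul_eq_mul, Finset.card_univ, Sym2.card]

def symTensors : Submodule 𝕜 (ι → ι → ι → 𝕜) where
  carrier := {U | (∀ i j k, U i j k = U j i k) ∧ ∀ i j k, U i j k = U i k j}
  add_mem' hU hW := ⟨fun i j k => by simp only [Pi.add_apply, hU.1 i j k, hW.1 i j k],
    fun i j k => by simp only [Pi.add_apply, hU.2 i j k, hW.2 i j k]⟩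
  zero_mem' := ⟨fun _ _ _ => rfl, fun _ _ _ => rfl⟩
  smul_mem' c U hU := ⟨fun i j k => by simp only [Pi.smul_apply, hU.1 i j k],
    fun i j k => by simp only [Pi.smul_apply, hU.2 i j k]⟩

variable {𝕜 ι}

theorem Multiset.pair_eq_pair_iff {α : Type*} {a b c d : α} :
    a ::ₘ b ::ₘ 0 = c ::ₘ d ::ₘ 0 ↔ a = c ∧ b = d ∨ a = d ∧ b = c := by
  constructor
  · intro h
    rcases Multiset.cons_eq_cons.1 h with ⟨rfl, h⟩ | ⟨-, cs, h1, h2⟩ <;>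
      simp_all [Multiset.cons_eq_cons]
  · rintro (⟨rfl, rfl⟩ | ⟨rfl, rfl⟩)
    · rfl
    · exact Multiset.cons_swap _ _ _

theorem symTensors.apply_eq_of_pair_eq {U : ι → ι → ι → 𝕜} (hU : U ∈ symTensors 𝕜 ι) (a : ι)
    {b c j k : ι} (h : b ::ₘ c ::ₘ 0 = j ::ₘ k ::ₘ 0) : U a b c = U a j k := by
  rcases Multiset.pair_eq_pair_iff.1 h with ⟨rfl, rfl⟩ | ⟨rfl, rfl⟩
  · rfl
  · exact hU.2 a b c

theorem symTensors.apply_eq_of_sym_eq {U : ι → ι → ι → 𝕜} (hU : U ∈ symTensors 𝕜 ι)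
    {a b c i j k : ι} (h : (a ::ₛ b ::ₛ c ::ₛ .nil : Sym ι 3) = i ::ₛ j ::ₛ k ::ₛ .nil) :
    U a b c = U i j k := by
  have h' : a ::ₘ b ::ₘ c ::ₘ 0 = i ::ₘ j ::ₘ k ::ₘ 0 := congrArg Subtype.val h
  rcases Multiset.cons_eq_cons.1 h' with ⟨rfl, h₀⟩ | ⟨-, cs, h₁, h₂⟩
  · exact symTensors.apply_eq_of_pair_eq hU a h₀
  · obtain ⟨d, rfl⟩ : ∃ d, cs = {d} :=
      Multiset.card_eq_one.1 (by simpa using congrArg Multiset.card h₁)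
    rw [symTensors.apply_eq_of_pair_eq hU a h₁, hU.1, symTensors.apply_eq_of_pair_eq hU i h₂.symm]

theorem Sym.exists_eq_cons_cons_cons {α : Type*} (s : Sym α 3) :
    ∃ t : α × α × α, s = t.1 ::ₛ t.2.1 ::ₛ t.2.2 ::ₛ .nil := by
  obtain ⟨a, s, rfl⟩ := s.exists_eq_cons_of_succ
  obtain ⟨b, s, rfl⟩ := s.exists_eq_cons_of_succ
  obtain ⟨c, s, rfl⟩ := s.exists_eq_cons_of_succ
  exact ⟨(a, b, c), by rw [Sym.eq_nil_of_card_zero s]⟩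

variable (𝕜 ι) in
def symTensorsEquivSym : symTensors 𝕜 ι ≃ₗ[𝕜] (Sym ι 3 → 𝕜) where
  toFun U s := U.1 s.exists_eq_cons_cons_cons.choose.1 s.exists_eq_cons_cons_cons.choose.2.1
    s.exists_eq_cons_cons_cons.choose.2.2
  map_add' _ _ := rfl
  map_smul' _ _ := rfl
  invFun f := ⟨fun i j k => f (i ::ₛ j ::ₛ k ::ₛ .nil),
    fun i j k => congrArg f (Sym.cons_swap i j _),
    fun i j k => congrArg f (congrArg (i ::ₛ ·) (Sym.cons_swap j k _))⟩
  left_inv U := by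
    ext i j k
    exact symTensors.apply_eq_of_sym_eq U.2
      (i ::ₛ j ::ₛ k ::ₛ .nil).exists_eq_cons_cons_cons.choose_spec.symm
  right_inv f := by
    ext s
    exact congrArg f s.exists_eq_cons_cons_cons.choose_spec.symm

theorem finrank_symTensors [Fintype ι] :
    finrank 𝕜 (symTensors 𝕜 ι) = (Fintype.card ι + 2).choose 3 := by
  classical
  rw [(symTensorsEquivSym 𝕜 ι).finrank_eq, Module.finrank_fintype_fun_eq_card,
    Sym.card_sym_eq_choose]
  rfl

variable (𝕜 ι) in
def cyclicTensors : Submodule 𝕜 (ι → ι → ι → 𝕜) where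
  carrier := {T | (∀ i j k, T i j k = -T i k j) ∧ ∀ i j k, T i j k + T j k i + T k i j = 0}
  add_mem' hT hW := ⟨fun i j k => by simp only [Pi.add_apply, hT.1 i j k, hW.1 i j k, neg_add],
    fun i j k => by simp only [Pi.add_apply]; linear_combination hT.2 i j k + hW.2 i j k⟩
  zero_mem' := ⟨fun _ _ _ => neg_zero.symm, fun _ _ _ => by simp⟩
  smul_mem' c T hT := ⟨fun i j k => by simp only [Pi.smul_apply, hT.1 i j k, smul_neg],
    fun i j k => by simp only [Pi.smul_apply, smul_eq_mul]; linear_combination c * hT.2 i j k⟩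

variable (𝕜 ι) in
def antisymmetrize₂₃ : symPairs 𝕜 ι (ι → 𝕜) →ₗ[𝕜] ι → ι → ι → 𝕜 where
  toFun U i j k := U.1 i j k - U.1 i k j
  map_add' U W := by ext; simp only [Submodule.coe_add, Pi.add_apply]; ring
  map_smul' c U := by
    ext; simp only [Submodule.coe_smul, Pi.smul_apply, smul_eq_mul, RingHom.id_apply]; ring

theorem range_antisymmetrize₂₃ [CharZero 𝕜] :
    LinearMap.range (antisymmetrize₂₃ 𝕜 ι) = cyclicTensors 𝕜 ι := by
  apply le_antisymm
  · rintro T ⟨U, rfl⟩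
    have hU : ∀ i j k, U.1 i j k = U.1 j i k := fun i j => congrFun (U.2 i j)
    refine ⟨fun i j k => ?_, fun i j k => ?_⟩ <;>
      simp only [antisymmetrize₂₃, LinearMap.coe_mk, AddHom.coe_mk]
    · ring
    · linear_combination hU k i j - hU j i k - hU k j i
  · rintro T ⟨hT₁, hT₂⟩
    refine ⟨⟨fun i j k => (T i j k + T j i k) / 3, fun i j => funext fun k => by ring⟩, ?_⟩
    ext i j k
    simp only [antisymmetrize₂₃, LinearMap.coe_mk, AddHom.coe_mk]
    linear_combination (-1/3 : 𝕜) * hT₁ i j k + (1/3 : 𝕜) * hT₁ j k i - (1/3 : 𝕜) * hT₂ i j k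

variable (𝕜 ι) in
def kerAntisymmetrize₂₃Equiv : LinearMap.ker (antisymmetrize₂₃ 𝕜 ι) ≃ₗ[𝕜] symTensors 𝕜 ι where
  toFun U := ⟨U.1.1, fun i j k => congrFun (U.1.2 i j) k, fun i j k =>
    sub_eq_zero.1 (congrFun (congrFun (congrFun (LinearMap.mem_ker.1 U.2) i) j) k)⟩
  map_add' _ _ := rfl
  map_smul' _ _ := rfl
  invFun U := ⟨⟨U.1, fun i j => funext (U.2.1 i j)⟩, LinearMap.mem_ker.2 <| by
    ext i j k; exact sub_eq_zero.2 (U.2.2 i j k)⟩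
  left_inv _ := rfl
  right_inv _ := rfl

theorem finrank_cyclicTensors_add [CharZero 𝕜] [Fintype ι] :
    finrank 𝕜 (cyclicTensors 𝕜 ι) + (Fintype.card ι + 2).choose 3
      = (Fintype.card ι + 1).choose 2 * Fintype.card ι := by
  rw [← range_antisymmetrize₂₃, ← finrank_symTensors (𝕜 := 𝕜),
    ← (kerAntisymmetrize₂₃Equiv 𝕜 ι).finrank_eq, LinearMap.finrank_range_add_finrank_ker,
    finrank_symPairs, Module.finrank_fintype_fun_eq_card]

end Tensors

section Forms

variable {𝕜 : Type*} [Field 𝕜] {ι : Type*} [Fintype ι] [DecidableEq ι]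

variable (𝕜 ι) in
def bilinearEquivPi : ((ι → 𝕜) →ₗ[𝕜] (ι → 𝕜) →ₗ[𝕜] 𝕜) ≃ₗ[𝕜] (ι → ι → 𝕜) :=
  (LinearEquiv.piRing 𝕜 _ ι 𝕜).trans (LinearEquiv.piCongrRight fun _ => LinearEquiv.piRing 𝕜 𝕜 ι 𝕜)

variable (𝕜 ι) in
def trilinearEquivPi :
    ((ι → 𝕜) →ₗ[𝕜] (ι → 𝕜) →ₗ[𝕜] (ι → 𝕜) →ₗ[𝕜] 𝕜) ≃ₗ[𝕜] (ι → ι → ι → 𝕜) :=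
  (LinearEquiv.piRing 𝕜 _ ι 𝕜).trans (LinearEquiv.piCongrRight fun _ => bilinearEquivPi 𝕜 ι)

@[simp]
theorem trilinearEquivPi_apply (T : (ι → 𝕜) →ₗ[𝕜] (ι → 𝕜) →ₗ[𝕜] (ι → 𝕜) →ₗ[𝕜] 𝕜) (i j k : ι) :
    trilinearEquivPi 𝕜 ι T i j k = T (Pi.single i 1) (Pi.single j 1) (Pi.single k 1) := rfl

theorem trilinear_ext_pi_single {S T : (ι → 𝕜) →ₗ[𝕜] (ι → 𝕜) →ₗ[𝕜] (ι → 𝕜) →ₗ[𝕜] 𝕜}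
    (h : ∀ i j k, S (Pi.single i 1) (Pi.single j 1) (Pi.single k 1)
      = T (Pi.single i 1) (Pi.single j 1) (Pi.single k 1)) : S = T :=
  (trilinearEquivPi 𝕜 ι).injective (funext₃ h)

variable (𝕜) in
def cyclicForms (E : Type*) [AddCommGroup E] [Module 𝕜 E] :
    Submodule 𝕜 (E →ₗ[𝕜] E →ₗ[𝕜] E →ₗ[𝕜] 𝕜) where
  carrier := {T | (∀ x y z, T x y z = -T x z y) ∧ ∀ x y z, T x y z + T y z x + T z x y = 0}
  add_mem' hT hW := ⟨fun x y z => by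
      simp only [LinearMap.add_apply, hT.1 x y z, hW.1 x y z, neg_add],
    fun x y z => by simp only [LinearMap.add_apply]; linear_combination hT.2 x y z + hW.2 x y z⟩
  zero_mem' := ⟨fun _ _ _ => by simp, fun _ _ _ => by simp⟩
  smul_mem' c T hT := ⟨fun x y z => by simp only [LinearMap.smul_apply, hT.1 x y z, smul_neg],
    fun x y z => by
      simp only [LinearMap.smul_apply, smul_eq_mul]; linear_combination c * hT.2 x y z⟩

theorem mem_cyclicForms_iff {T : (ι → 𝕜) →ₗ[𝕜] (ι → 𝕜) →ₗ[𝕜] (ι → 𝕜) →ₗ[𝕜] 𝕜} :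
    T ∈ cyclicForms 𝕜 (ι → 𝕜) ↔ trilinearEquivPi 𝕜 ι T ∈ cyclicTensors 𝕜 ι := by
  constructor
  · rintro ⟨hT₁, hT₂⟩
    exact ⟨fun i j k => hT₁ _ _ _, fun i j k => hT₂ _ _ _⟩
  · rintro ⟨hT₁, hT₂⟩
    -- Both conditions are identities between trilinear maps, so they follow from the basis case.
    have h₁ : T + (LinearMap.lflip (R₀ := 𝕜)).toLinearMap ∘ₗ T = 0 :=
      trilinear_ext_pi_single fun i j k => by simpa [eq_neg_iff_add_eq_zero] using hT₁ i j k
    have h₂ : T + ((LinearMap.lflip (R₀ := 𝕜)).toLinearMap ∘ₗ T).flip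
        + (LinearMap.lflip (R₀ := 𝕜)).toLinearMap ∘ₗ T.flip = 0 :=
      trilinear_ext_pi_single fun i j k => by simpa using hT₂ i j k
    exact ⟨fun x y z => by
        simpa [eq_neg_iff_add_eq_zero] using LinearMap.congr_fun (LinearMap.congr_fun₂ h₁ x y) z,
      fun x y z => by simpa using LinearMap.congr_fun (LinearMap.congr_fun₂ h₂ x y) z⟩

variable (𝕜 ι) in
def cyclicFormsEquivTensors : cyclicForms 𝕜 (ι → 𝕜) ≃ₗ[𝕜] cyclicTensors 𝕜 ι :=
  LinearEquiv.ofSubmodules (trilinearEquivPi 𝕜 ι) _ _ <| Submodule.ext fun W => by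
    rw [Submodule.mem_map_equiv, mem_cyclicForms_iff, LinearEquiv.apply_symm_apply]

instance : Module.Finite 𝕜 (cyclicForms 𝕜 (ι → 𝕜)) :=
  .equiv (cyclicFormsEquivTensors 𝕜 ι).symm

instance : Module.Free 𝕜 (cyclicForms 𝕜 (ι → 𝕜)) :=
  .of_equiv (cyclicFormsEquivTensors 𝕜 ι).symm

variable (𝕜) in
def symBilinForms (E : Type*) [AddCommGroup E] [Module 𝕜 E] :
    Submodule 𝕜 (E →ₗ[𝕜] E →ₗ[𝕜] 𝕜) where
  carrier := {Q | ∀ x y, Q x y = Q y x}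
  add_mem' hQ hR x y := by simp only [LinearMap.add_apply, hQ x y, hR x y]
  zero_mem' _ _ := rfl
  smul_mem' c Q hQ x y := by simp only [LinearMap.smul_apply, hQ x y]

theorem mem_symBilinForms_iff {Q : (ι → 𝕜) →ₗ[𝕜] (ι → 𝕜) →ₗ[𝕜] 𝕜} :
    Q ∈ symBilinForms 𝕜 (ι → 𝕜) ↔ bilinearEquivPi 𝕜 ι Q ∈ symPairs 𝕜 ι 𝕜 := by
  refine ⟨fun hQ i j => hQ _ _, fun hQ x y => ?_⟩
  have h : Q = Q.flip := (bilinearEquivPi 𝕜 ι).injective (funext₂ hQ)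
  exact LinearMap.congr_fun₂ h x y

variable (𝕜 ι) in
def symBilinFormsEquivSymPairs : symBilinForms 𝕜 (ι → 𝕜) ≃ₗ[𝕜] symPairs 𝕜 ι 𝕜 :=
  LinearEquiv.ofSubmodules (bilinearEquivPi 𝕜 ι) _ _ <| Submodule.ext fun Q => by
    rw [Submodule.mem_map_equiv, mem_symBilinForms_iff, LinearEquiv.apply_symm_apply]

instance : Module.Free 𝕜 (symBilinForms 𝕜 (ι → 𝕜)) :=
  .of_equiv (symBilinFormsEquivSymPairs 𝕜 ι).symm

theorem finrank_symBilinForms :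
    finrank 𝕜 (symBilinForms 𝕜 (ι → 𝕜)) = (Fintype.card ι + 1).choose 2 := by
  rw [(symBilinFormsEquivSymPairs 𝕜 ι).finrank_eq, finrank_symPairs, finrank_self, mul_one]

variable (𝕜) in
def mixedSymmBilinForms (E : Type*) [AddCommGroup E] [Module 𝕜 E] :
    Submodule 𝕜 (E × E →ₗ[𝕜] E × E →ₗ[𝕜] 𝕜) where
  carrier := {Q | (∀ X Y, Q X Y = Q Y X) ∧ ∀ x y, Q (x, 0) (0, y) = Q (y, 0) (0, x)}
  add_mem' hQ hR := ⟨fun X Y => by simp only [LinearMap.add_apply, hQ.1 X Y, hR.1 X Y],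
    fun x y => by simp only [LinearMap.add_apply, hQ.2 x y, hR.2 x y]⟩
  zero_mem' := ⟨fun _ _ => rfl, fun _ _ => rfl⟩
  smul_mem' c Q hQ := ⟨fun X Y => by simp only [LinearMap.smul_apply, hQ.1 X Y],
    fun x y => by simp only [LinearMap.smul_apply, hQ.2 x y]⟩

theorem LinearMap.apply_prod_eq_add {E : Type*} [AddCommGroup E] [Module 𝕜 E]
    (Q : E × E →ₗ[𝕜] E × E →ₗ[𝕜] 𝕜) (X Y : E × E) :
    Q X Y = Q (X.1, 0) (Y.1, 0) + Q (X.1, 0) (0, Y.2) + Q (0, X.2) (Y.1, 0)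
      + Q (0, X.2) (0, Y.2) := by
  conv_lhs => rw [← Prod.fst_add_snd X, ← Prod.fst_add_snd Y]
  simp only [map_add, LinearMap.add_apply]
  ring

variable (𝕜) in
def mixedSymmBilinFormsEquiv (E : Type*) [AddCommGroup E] [Module 𝕜 E] :
    mixedSymmBilinForms 𝕜 E ≃ₗ[𝕜] symBilinForms 𝕜 E × symBilinForms 𝕜 E × symBilinForms 𝕜 E where
  toFun Q := (⟨Q.1.compl₁₂ (.inl 𝕜 E E) (.inl 𝕜 E E), fun x y => Q.2.1 _ _⟩,
    ⟨Q.1.compl₁₂ (.inl 𝕜 E E) (.inr 𝕜 E E), fun x y => Q.2.2 x y⟩,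
    ⟨Q.1.compl₁₂ (.inr 𝕜 E E) (.inr 𝕜 E E), fun x y => Q.2.1 _ _⟩)
  map_add' _ _ := rfl
  map_smul' _ _ := rfl
  invFun B := ⟨B.1.1.compl₁₂ (.fst 𝕜 E E) (.fst 𝕜 E E)
      + B.2.1.1.compl₁₂ (.fst 𝕜 E E) (.snd 𝕜 E E) + B.2.1.1.compl₁₂ (.snd 𝕜 E E) (.fst 𝕜 E E)
      + B.2.2.1.compl₁₂ (.snd 𝕜 E E) (.snd 𝕜 E E),
    fun X Y => by
      simp only [LinearMap.add_apply, LinearMap.compl₁₂_apply, LinearMap.fst_apply,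
        LinearMap.snd_apply, B.1.2 X.1, B.2.1.2 X.1, B.2.1.2 X.2, B.2.2.2 X.2]
      ring,
    fun x y => by simpa using B.2.1.2 x y⟩
  left_inv Q := by
    refine Subtype.ext (LinearMap.ext fun X => LinearMap.ext fun Y => ?_)
    have hmix : Q.1 (0, X.2) (Y.1, 0) = Q.1 (X.2, 0) (0, Y.1) := by rw [Q.2.1, Q.2.2]
    simp only [LinearMap.add_apply, LinearMap.compl₁₂_apply, LinearMap.fst_apply,
      LinearMap.snd_apply, LinearMap.inl_apply, LinearMap.inr_apply]
    rw [Q.1.apply_prod_eq_add X Y, hmix]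
  right_inv B := by
    ext <;> simp

instance : Module.Free 𝕜 (mixedSymmBilinForms 𝕜 (ι → 𝕜)) :=
  .of_equiv (mixedSymmBilinFormsEquiv 𝕜 (ι → 𝕜)).symm

end Forms

section SemibasicForms

variable {E : Type*} [AddCommGroup E] [Module ℝ E]

def skewMixedForm : (E →ₗ[ℝ] E →ₗ[ℝ] ℝ) →ₗ[ℝ] E × E →ₗ[ℝ] E × E →ₗ[ℝ] ℝ where
  toFun β :=
    (1 / 4 : ℝ) • (β.compl₁₂ (.fst ℝ E E) (.snd ℝ E E) - β.compl₁₂ (.snd ℝ E E) (.fst ℝ E E))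
  map_add' β γ := LinearMap.ext₂ fun X Y => by simp; ring
  map_smul' c β := LinearMap.ext₂ fun X Y => by simp; ring

theorem skewMixedForm_apply (β : E →ₗ[ℝ] E →ₗ[ℝ] ℝ) (X Y : E × E) :
    skewMixedForm β X Y = (β X.1 Y.2 - β X.2 Y.1) / 4 := by
  simp [skewMixedForm]; ring

theorem skewMixedForm_comm {β : E →ₗ[ℝ] E →ₗ[ℝ] ℝ} (hβ : ∀ x y, β x y = -β y x) (X Y : E × E) :
    skewMixedForm β X Y = skewMixedForm β Y X := by
  rw [skewMixedForm_apply, skewMixedForm_apply, hβ X.1, hβ X.2]; ring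

theorem skewMixedForm_inl_inr_sub {β : E →ₗ[ℝ] E →ₗ[ℝ] ℝ} (hβ : ∀ x y, β x y = -β y x)
    (x y : E) :
    skewMixedForm β (x, 0) (0, y) - skewMixedForm β (y, 0) (0, x) = β x y / 2 := by
  simp only [skewMixedForm_apply, map_zero, hβ y x]; ring

def restrictSemibasic (T : E × E →ₗ[ℝ] E × E →ₗ[ℝ] E × E →ₗ[ℝ] ℝ) (f : E →ₗ[ℝ] E × E) :
    E →ₗ[ℝ] E →ₗ[ℝ] E →ₗ[ℝ] ℝ :=
  (T.compr₂ (LinearMap.lcomp ℝ ℝ (.inl ℝ E E))).compl₁₂ f (.inl ℝ E E)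

end SemibasicForms

section KerTau2

variable {n : ℕ}

def IsTrilin.toLinearMap {A : V n → V n → V n → ℝ} (hA : IsTrilin n A) : Tri n where
  toFun X := LinearMap.mk₂ ℝ (A X) (hA.2.2.1 X) (fun c => hA.2.2.2.1 c X) (hA.2.2.2.2.1 X)
    (fun c => hA.2.2.2.2.2 c X)
  map_add' X X' := LinearMap.ext₂ (hA.1 X X')
  map_smul' c X := LinearMap.ext₂ (hA.2.1 c X)

theorem IsTrilin.apply_eq_of_semibasic {A : V n → V n → V n → ℝ} (hA : IsTrilin n A)
    (hY : ∀ X (y : Fin n → ℝ) Z, A X (0, y) Z = 0) (hZ : ∀ X Y (z : Fin n → ℝ), A X Y (0, z) = 0)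
    (X Y Z : V n) : A X Y Z = A (X.1, 0) (Y.1, 0) (Z.1, 0) + A (0, X.2) (Y.1, 0) (Z.1, 0) := by
  conv_lhs => rw [← Prod.fst_add_snd X, ← Prod.fst_add_snd Y, ← Prod.fst_add_snd Z]
  simp only [hA.1, hA.2.2.1, hA.2.2.2.2.1, hY, hZ, add_zero]

theorem Ph_apply (X : V n) : Ph n X = (X.1, 0) := rfl

theorem Jmap_apply (X : V n) : Jmap n X = (0, X.1) := rfl

section Parts

variable (Th Tv : (Fin n → ℝ) →ₗ[ℝ] (Fin n → ℝ) →ₗ[ℝ] (Fin n → ℝ) →ₗ[ℝ] ℝ)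

def semibasicOfParts : V n → V n → V n → ℝ := fun X Y Z => Th X.1 Y.1 Z.1 + Tv X.2 Y.1 Z.1

theorem isTrilin_semibasicOfParts : IsTrilin n (semibasicOfParts Th Tv) := by
  refine ⟨?_, ?_, ?_, ?_, ?_, ?_⟩ <;> intros <;>
    simp only [semibasicOfParts, Prod.fst_add, Prod.snd_add, Prod.smul_fst, Prod.smul_snd,
      map_add, map_smul, LinearMap.add_apply, LinearMap.smul_apply, smul_eq_mul] <;> ring

variable {Th Tv}

theorem semibasicOfParts_mem_kerTau2 (hTh : Th ∈ cyclicForms ℝ (Fin n → ℝ))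
    (hTv : Tv ∈ cyclicForms ℝ (Fin n → ℝ)) {Q : Bil n}
    (hQ : Q ∈ mixedSymmBilinForms ℝ (Fin n → ℝ)) :
    (semibasicOfParts Th Tv, Q + skewMixedForm (Tv (dlt n n))) ∈ kerTau2 n := by
  refine ⟨isTrilin_semibasicOfParts Th Tv, fun X Y Z => ?_, fun X y Z => ?_, fun X Y z => ?_,
    fun X Y => ?_, fun X Y Z => ?_, fun X Y Z => ?_, fun X Y => ?_⟩
  · show Th X.1 Y.1 Z.1 + Tv X.2 Y.1 Z.1 = -(Th X.1 Z.1 Y.1 + Tv X.2 Z.1 Y.1)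
    rw [hTh.1 X.1 Y.1, hTv.1 X.2 Y.1, neg_add]
  · simp only [semibasicOfParts, map_zero, LinearMap.zero_apply, add_zero]
  · simp only [semibasicOfParts, map_zero, add_zero]
  · show (Q + skewMixedForm (Tv (dlt n n))) X Y = (Q + skewMixedForm (Tv (dlt n n))) Y X
    simp only [LinearMap.add_apply, hQ.1 X Y, skewMixedForm_comm (hTv.1 _) X Y]
  · simpa [semibasicOfParts, Ph_apply] using hTh.2 X.1 Y.1 Z.1
  · simpa [semibasicOfParts, Jmap_apply] using hTv.2 X.1 Y.1 Z.1
  · have h := skewMixedForm_inl_inr_sub (hTv.1 (dlt n n)) X.1 Y.1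
    simp only [semibasicOfParts, Cvec, vvec, Ph_apply, Jmap_apply, map_zero, LinearMap.zero_apply,
      zero_add, LinearMap.add_apply, hQ.2 X.1 Y.1]
    linarith

end Parts

variable (n) in
def horizontalPart : kerTau2 n →ₗ[ℝ] (Fin n → ℝ) →ₗ[ℝ] (Fin n → ℝ) →ₗ[ℝ] (Fin n → ℝ) →ₗ[ℝ] ℝ where
  toFun B := restrictSemibasic B.2.1.toLinearMap (.inl ℝ _ _)
  map_add' _ _ := rfl
  map_smul' _ _ := rfl

variable (n) in
def verticalPart : kerTau2 n →ₗ[ℝ] (Fin n → ℝ) →ₗ[ℝ] (Fin n → ℝ) →ₗ[ℝ] (Fin n → ℝ) →ₗ[ℝ] ℝ where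
  toFun B := restrictSemibasic B.2.1.toLinearMap (.inr ℝ _ _)
  map_add' _ _ := rfl
  map_smul' _ _ := rfl

@[simp]
theorem horizontalPart_apply (B : kerTau2 n) (x y z : Fin n → ℝ) :
    horizontalPart n B x y z = B.1.1 (x, 0) (y, 0) (z, 0) := rfl

@[simp]
theorem verticalPart_apply (B : kerTau2 n) (x y z : Fin n → ℝ) :
    verticalPart n B x y z = B.1.1 (0, x) (y, 0) (z, 0) := rfl

theorem horizontalPart_mem (B : kerTau2 n) : horizontalPart n B ∈ cyclicForms ℝ (Fin n → ℝ) := by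
  obtain ⟨-, hanti, -, -, -, hi, -, -⟩ := B.2
  exact ⟨fun x y z => hanti _ _ _, fun x y z => hi (x, 0) (y, 0) (z, 0)⟩

theorem verticalPart_mem (B : kerTau2 n) : verticalPart n B ∈ cyclicForms ℝ (Fin n → ℝ) := by
  obtain ⟨-, hanti, -, -, -, -, hii, -⟩ := B.2
  exact ⟨fun x y z => hanti _ _ _, fun x y z => hii (x, 0) (y, 0) (z, 0)⟩

theorem sub_skewMixedForm_mem (B : kerTau2 n) :
    B.1.2 - skewMixedForm (verticalPart n B (dlt n n)) ∈ mixedSymmBilinForms ℝ (Fin n → ℝ) := by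
  have hβ := (verticalPart_mem B).1 (dlt n n)
  obtain ⟨-, -, -, -, hsymm, -, -, hiii⟩ := B.2
  refine ⟨fun X Y => ?_, fun x y => ?_⟩
  · simp only [LinearMap.sub_apply, hsymm X Y, skewMixedForm_comm hβ X Y]
  · have h := hiii (x, 0) (y, 0)
    have h' := skewMixedForm_inl_inr_sub hβ x y
    have hC : B.1.1 (Cvec n) (x, 0) (y, 0) = verticalPart n B (dlt n n) x y := rfl
    rw [Ph_apply, Ph_apply, Jmap_apply, Jmap_apply, hC] at h
    simp only [LinearMap.sub_apply]
    linarith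

variable (n) in
def kerTau2Equiv : kerTau2 n ≃ₗ[ℝ] cyclicForms ℝ (Fin n → ℝ) × cyclicForms ℝ (Fin n → ℝ)
    × mixedSymmBilinForms ℝ (Fin n → ℝ) where
  toFun B := (⟨horizontalPart n B, horizontalPart_mem B⟩, ⟨verticalPart n B, verticalPart_mem B⟩,
    ⟨B.1.2 - skewMixedForm (verticalPart n B (dlt n n)), sub_skewMixedForm_mem B⟩)
  map_add' B B' := by
    refine Prod.ext rfl (Prod.ext rfl (Subtype.ext ?_))
    simp only [Submodule.coe_add, Prod.snd_add, map_add, LinearMap.add_apply]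
    abel
  map_smul' c B := by
    refine Prod.ext rfl (Prod.ext rfl (Subtype.ext ?_))
    simp only [Submodule.coe_smul, Prod.smul_snd, map_smul, LinearMap.smul_apply]
    exact (smul_sub c B.1.2 _).symm
  invFun P := ⟨_, semibasicOfParts_mem_kerTau2 P.1.2 P.2.1.2 P.2.2.2⟩
  left_inv B := by
    obtain ⟨hT, -, hY, hZ, -⟩ := B.2
    refine Subtype.ext (Prod.ext ?_ (sub_add_cancel B.1.2 _))
    funext X Y Z
    exact (hT.apply_eq_of_semibasic hY hZ X Y Z).symm
  right_inv P := by
    have hv : verticalPart n ⟨_, semibasicOfParts_mem_kerTau2 P.1.2 P.2.1.2 P.2.2.2⟩ = P.2.1.1 :=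
      LinearMap.ext fun x => LinearMap.ext₂ fun y z => by simp [semibasicOfParts]
    refine Prod.ext (Subtype.ext ?_) (Prod.ext (Subtype.ext hv) (Subtype.ext ?_))
    · exact LinearMap.ext fun x => LinearMap.ext₂ fun y z => by simp [semibasicOfParts]
    · show P.2.2.1 + _ - skewMixedForm (verticalPart n _ (dlt n n)) = P.2.2.1
      rw [hv]
      abel

end KerTau2

theorem two_mul_add_three_mul_choose_two {n k : ℕ}
    (hk : k + (n + 2).choose 3 = (n + 1).choose 2 * n) :
    2 * k + 3 * (n + 1).choose 2 = (4 * n ^ 3 + 9 * n ^ 2 + 5 * n) / 6 := by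
  have h₂ : (n + 1).choose 2 * 2 = (n + 1) * n := by
    rw [← Nat.add_one_mul_choose_eq, Nat.choose_one_right]
  have h₃ : (n + 2).choose 3 * 3 = (n + 2) * (n + 1).choose 2 := by
    rw [← Nat.add_one_mul_choose_eq]
  refine (Nat.div_eq_of_eq_mul_left (by norm_num) ?_).symm
  zify at hk h₂ h₃ ⊢
  linear_combination -12 * hk + 4 * h₃ - (4 * (n : ℤ) + 5) * h₂

theorem dim_kerTau2_general (n : ℕ) :
    Module.finrank ℝ (kerTau2 n) = (4 * n ^ 3 + 9 * n ^ 2 + 5 * n) / 6 := by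
  have hK := finrank_cyclicTensors_add (𝕜 := ℝ) (ι := Fin n)
  rw [← (cyclicFormsEquivTensors ℝ (Fin n)).finrank_eq, Fintype.card_fin] at hK
  rw [(kerTau2Equiv n).finrank_eq, finrank_prod, finrank_prod,
    (mixedSymmBilinFormsEquiv ℝ _).finrank_eq, finrank_prod, finrank_prod, finrank_symBilinForms,
    Fintype.card_fin, ← two_mul_add_three_mul_choose_two hK]
  ring

/-- the kernel of `τ₂` has dimension `(4n³ + 9n² + 5n)/6`. -/
theorem dim_kerTau2 (n : ℕ) (hn : 1 ≤ n) :
    Module.finrank ℝ (kerTau2 n) = (4 * n ^ 3 + 9 * n ^ 2 + 5 * n) / 6 :=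
  dim_kerTau2_general n
end
end

section
/- For every k with 1 ≤ k ≤ 2n, the subspace g₂(P₂)_{ê₁…ê_k} := { A ∈ g₂(P₂) : A(ê_j, X) = 0 for all X ∈ V and all 1 ≤ j ≤ k } has dimension (n−k+1)(n−k)/2 + (n−1)(n−k) if k ≤ n, and dimension 0 if k > n; here g₂(P₂) is the space of symmetric bilinear forms A on V with A(X, C) = 0 and A(P_h X, J Y) = A(P_h Y, J X) for all X, Y ∈ V, and ê_j := h_j + j·v_j for 1 ≤ j ≤ n−1 (the scalar factor being the integer value of j), ê_n := S + v_1 + ⋯ + v_n, and ê_{n+j} := v_j for 1 ≤ j ≤ n. -/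
set_option synthInstance.maxHeartbeats 1000000
set_option maxHeartbeats 1000000

noncomputable section

/-- The rotated basis vectors `ê_1, …, ê_{2n}` (1-indexed): `ê_j = h_j + j·v_j` for
`j < n`, `ê_n = S + v_1 + ⋯ + v_n`, and `ê_{n+j} = v_j`. -/
def ehat (n j : ℕ) : V n :=
  if j < n then hvec n j + (j : ℝ) • vvec n j
  else if j = n then Svec n + ∑ i ∈ Finset.Icc 1 n, vvec n i
  else vvec n (j - n)

/-- The subspace `g₂(P₂)_{ê₁…ê_k}` of `g₂(P₂)` of forms annihilating `ê_1, …, ê_k`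
in the first argument. -/
def g2P2e (n k : ℕ) : Submodule ℝ (Bil n) where
  carrier := {A | (∀ X Y, A X Y = A Y X) ∧ (∀ X, A X (Cvec n) = 0) ∧
    (∀ X Y, A (Ph n X) (Jmap n Y) = A (Ph n Y) (Jmap n X)) ∧
    (∀ j, 1 ≤ j → j ≤ k → ∀ X, A (ehat n j) X = 0)}
  add_mem' := by
    rintro a b ⟨ha1, ha2, ha3, ha4⟩ ⟨hb1, hb2, hb3, hb4⟩
    refine ⟨fun X Y => ?_, fun X => ?_, fun X Y => ?_, fun j hj1 hj2 X => ?_⟩ <;>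
      simp only [LinearMap.add_apply]
    · linear_combination ha1 X Y + hb1 X Y
    · linear_combination ha2 X + hb2 X
    · linear_combination ha3 X Y + hb3 X Y
    · linear_combination ha4 j hj1 hj2 X + hb4 j hj1 hj2 X
  zero_mem' := ⟨fun X Y => by simp, fun X => by simp, fun X Y => by simp,
    fun j hj1 hj2 X => by simp⟩
  smul_mem' := by
    rintro c a ⟨ha1, ha2, ha3, ha4⟩
    refine ⟨fun X Y => ?_, fun X => ?_, fun X Y => ?_, fun j hj1 hj2 X => ?_⟩ <;>
      simp only [LinearMap.smul_apply, smul_eq_mul]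
    · linear_combination c * ha1 X Y
    · linear_combination c * ha2 X
    · linear_combination c * ha3 X Y
    · linear_combination c * ha4 j hj1 hj2 X

/-!
In the basis `h, v` a form `A ∈ g₂(P₂)` has Gram matrix `[[H, M], [Mᵀ, W]]` with `H, M, W`
symmetric and the last columns of `M, W` (the direction of `C = v_n`) zero. Annihilating
`ê_j = h_j + j v_j` for `j ≤ k < n` expresses the `j`-th rows of `H` and `M` through `W`, and
together with the symmetry of `M` this forces `W_ij = 0` for distinct `i, j ≤ k`. The remaining
entries are free: `H` on indices `> k`, `M` and `W` on indices in `(k, n)`, `W` between `[1, k]`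
and `(k, n)`, and the diagonal of `W` on `[1, k]`; counting them gives the formula.
For `k ≥ n`, `ê_n = h_n + ∑ v_i` also kills `H_nn` and the diagonal of `W`, so nothing is left.
-/

open Module Matrix

@[elab_as_elim]
theorem Fin.cases_castAdd_castSucc_last {k m : ℕ} {motive : Fin (k + (m + 1)) → Prop}
    (lo : ∀ p : Fin k, motive (Fin.castAdd (m + 1) p))
    (mid : ∀ c : Fin m, motive (Fin.natAdd k c.castSucc))
    (top : motive (Fin.natAdd k (Fin.last m))) (i : Fin (k + (m + 1))) : motive i :=
  Fin.addCases lo (Fin.lastCases top mid) i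

lemma Sym2.mk_inf_sup {α : Type*} [LinearOrder α] (z : Sym2 α) : s(z.inf, z.sup) = z :=
  Sym2.sortEquiv.symm_apply_apply z

lemma Sym2.eq_zero_of_apply_inf_sup {α β : Type*} [LinearOrder α] [Zero β] {f : α → α → β}
    (hf : ∀ a b, f a b = f b a) (h : ∀ z : Sym2 α, f z.inf z.sup = 0) (a b : α) :
    f a b = 0 := by
  rcases le_total a b with hab | hab
  · simpa [hab] using h s(a, b)
  · simpa [hab, hf a b] using h s(b, a)

def adaptedBasis (n : ℕ) : Basis (Fin n ⊕ Fin n) ℝ (V n) :=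
  (Pi.basisFun ℝ (Fin n)).prod (Pi.basisFun ℝ (Fin n))

section AdaptedBasis

variable {n : ℕ} (i : Fin n)

lemma dlt_succ : dlt n (i + 1) = Pi.single i 1 := by
  funext j
  simp [dlt, Pi.single_apply, Fin.ext_iff]

lemma adaptedBasis_inl : adaptedBasis n (.inl i) = hvec n (i + 1) := by
  ext <;> simp [adaptedBasis, hvec, dlt_succ]

lemma adaptedBasis_inr : adaptedBasis n (.inr i) = vvec n (i + 1) := by
  ext <;> simp [adaptedBasis, vvec, dlt_succ]

@[simp] lemma Ph_adaptedBasis_inl : Ph n (adaptedBasis n (.inl i)) = adaptedBasis n (.inl i) := by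
  simp [Ph, adaptedBasis]

@[simp] lemma Ph_adaptedBasis_inr : Ph n (adaptedBasis n (.inr i)) = 0 := by
  simp [Ph, adaptedBasis]

@[simp] lemma Jmap_adaptedBasis_inl :
    Jmap n (adaptedBasis n (.inl i)) = adaptedBasis n (.inr i) := by
  simp [Jmap, adaptedBasis]

@[simp] lemma Jmap_adaptedBasis_inr : Jmap n (adaptedBasis n (.inr i)) = 0 := by
  simp [Jmap, adaptedBasis]

lemma ehat_succ (hi : (i : ℕ) + 1 < n) :
    ehat n (i + 1) = adaptedBasis n (.inl i) + ((i : ℝ) + 1) • adaptedBasis n (.inr i) := by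
  rw [ehat, if_pos hi, adaptedBasis_inl, adaptedBasis_inr]
  push_cast
  rfl

end AdaptedBasis

lemma Cvec_eq_adaptedBasis (n : ℕ) :
    Cvec (n + 1) = adaptedBasis (n + 1) (.inr (Fin.last n)) := by
  rw [adaptedBasis_inr, Fin.val_last]
  rfl

lemma ehat_self (n : ℕ) :
    ehat (n + 1) (n + 1) =
      adaptedBasis (n + 1) (.inl (Fin.last n)) + ∑ i, adaptedBasis (n + 1) (.inr i) := by
  simp_rw [adaptedBasis_inr, adaptedBasis_inl, Fin.val_last]
  rw [ehat, if_neg (lt_irrefl _), if_pos rfl, Svec,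
    Fin.sum_univ_eq_sum_range (fun i => vvec (n + 1) (i + 1)), Finset.range_eq_Ico,
    Finset.sum_Ico_add', Finset.Ico_add_one_right_eq_Icc]

lemma g2P2e_antitone (n : ℕ) : Antitone (g2P2e n) :=
  fun _ _ hkl _ ⟨hsymm, hC, hPJ, hann⟩ =>
    ⟨hsymm, hC, hPJ, fun j hj1 hjk => hann j hj1 (hjk.trans hkl)⟩

section Relations

variable {n k : ℕ} {A : Bil n}

lemma apply_inl_inr_comm (hA : A ∈ g2P2e n k) (i j : Fin n) :
    A (adaptedBasis n (.inl i)) (adaptedBasis n (.inr j)) =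
      A (adaptedBasis n (.inl j)) (adaptedBasis n (.inr i)) := by
  simpa using hA.2.2.1 (adaptedBasis n (.inl i)) (adaptedBasis n (.inl j))

lemma apply_inl_eq (hA : A ∈ g2P2e n k) {i : Fin n} (hik : (i : ℕ) < k)
    (hin : (i : ℕ) + 1 < n) (X : V n) :
    A (adaptedBasis n (.inl i)) X = -((i : ℝ) + 1) * A (adaptedBasis n (.inr i)) X := by
  have h := hA.2.2.2 (i + 1) (by omega) hik X
  rw [ehat_succ i hin, map_add, map_smul, LinearMap.add_apply, LinearMap.smul_apply,
    smul_eq_mul] at h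
  linear_combination h

/-- Comparing the symmetry of `A(h_·, v_·)` with the rows of `ê_{i+1}` and `ê_{j+1}` gives
`(j - i) A(v_{i+1}, v_{j+1}) = 0`. -/
lemma apply_inr_inr_eq_zero (hA : A ∈ g2P2e n k) {i j : Fin n} (hik : (i : ℕ) < k)
    (hin : (i : ℕ) + 1 < n) (hjk : (j : ℕ) < k) (hjn : (j : ℕ) + 1 < n) (hij : i ≠ j) :
    A (adaptedBasis n (.inr i)) (adaptedBasis n (.inr j)) = 0 := by
  have h : ((j : ℝ) - i) * A (adaptedBasis n (.inr i)) (adaptedBasis n (.inr j)) = 0 := by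
    linear_combination apply_inl_inr_comm hA i j - apply_inl_eq hA hik hin _
      + apply_inl_eq hA hjk hjn _ - ((j : ℝ) + 1) * hA.1 (adaptedBasis n (.inr j)) _
  refine (mul_eq_zero.1 h).resolve_left (sub_ne_zero.2 ?_)
  exact_mod_cast Fin.val_ne_of_ne hij.symm

end Relations

section RelationsLast

variable {n k : ℕ} {A : Bil (n + 1)}

lemma apply_inr_last (hA : A ∈ g2P2e (n + 1) k) (X : V (n + 1)) :
    A X (adaptedBasis (n + 1) (.inr (Fin.last n))) = 0 := by
  rw [← Cvec_eq_adaptedBasis]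
  exact hA.2.1 X

lemma apply_inl_last_eq (hA : A ∈ g2P2e (n + 1) k) (hk : n + 1 ≤ k) (X : V (n + 1)) :
    A (adaptedBasis (n + 1) (.inl (Fin.last n))) X =
      -∑ i, A (adaptedBasis (n + 1) (.inr i)) X := by
  have h := hA.2.2.2 (n + 1) (by omega) hk X
  rw [ehat_self, map_add, map_sum, LinearMap.add_apply, LinearMap.sum_apply] at h
  linear_combination h

lemma apply_inr_self_eq_zero (hA : A ∈ g2P2e (n + 1) k) (hk : n + 1 ≤ k) (i : Fin (n + 1)) :
    A (adaptedBasis (n + 1) (.inr i)) (adaptedBasis (n + 1) (.inr i)) = 0 := by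
  have h := apply_inl_last_eq hA hk (adaptedBasis (n + 1) (.inr i))
  rw [apply_inl_inr_comm hA, apply_inr_last hA,
    Finset.sum_eq_single i (fun j _ hji => ?_) (by simp)] at h
  · linarith
  rcases eq_or_ne j (Fin.last n) with rfl | hj
  · rw [hA.1]; exact apply_inr_last hA _
  rcases eq_or_ne i (Fin.last n) with rfl | hi
  · exact apply_inr_last hA _
  exact apply_inr_inr_eq_zero hA (by omega) (by simpa using Fin.val_lt_last hj) (by omega)
    (by simpa using Fin.val_lt_last hi) hji

lemma apply_inl_last_self_eq_zero (hA : A ∈ g2P2e (n + 1) k) (hk : n + 1 ≤ k) :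
    A (adaptedBasis (n + 1) (.inl (Fin.last n))) (adaptedBasis (n + 1) (.inl (Fin.last n))) =
      0 := by
  rw [apply_inl_last_eq hA hk, Finset.sum_eq_zero fun i _ => ?_, neg_zero]
  rw [hA.1, apply_inl_inr_comm hA, apply_inr_last hA]

end RelationsLast

def blockForm {n : ℕ} (H M W : Matrix (Fin n) (Fin n) ℝ) : Bil n :=
  Matrix.toLinearMap₂ (adaptedBasis n) (adaptedBasis n) (fromBlocks H M Mᵀ W)

section BlockForm

variable {n : ℕ} (H M W : Matrix (Fin n) (Fin n) ℝ) (i j : Fin n)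

@[simp] lemma blockForm_inl_inl :
    blockForm H M W (adaptedBasis n (.inl i)) (adaptedBasis n (.inl j)) = H i j :=
  toLinearMap₂_apply_basis _ _ _ _ _

@[simp] lemma blockForm_inl_inr :
    blockForm H M W (adaptedBasis n (.inl i)) (adaptedBasis n (.inr j)) = M i j :=
  toLinearMap₂_apply_basis _ _ _ _ _

@[simp] lemma blockForm_inr_inl :
    blockForm H M W (adaptedBasis n (.inr i)) (adaptedBasis n (.inl j)) = M j i :=
  toLinearMap₂_apply_basis _ _ _ _ _

@[simp] lemma blockForm_inr_inr :
    blockForm H M W (adaptedBasis n (.inr i)) (adaptedBasis n (.inr j)) = W i j :=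
  toLinearMap₂_apply_basis _ _ _ _ _

end BlockForm

lemma blockForm_mem_g2P2e {n k : ℕ} (hk : k ≤ n)
    {H M W : Matrix (Fin (n + 1)) (Fin (n + 1)) ℝ} (hH : H.IsSymm) (hM : M.IsSymm)
    (hW : W.IsSymm) (hMC : ∀ i, M i (Fin.last n) = 0) (hWC : ∀ i, W i (Fin.last n) = 0)
    (hHrow : ∀ i : Fin (n + 1), (i : ℕ) < k → ∀ j, H i j = -((i : ℝ) + 1) * M j i)
    (hMrow : ∀ i : Fin (n + 1), (i : ℕ) < k → ∀ j, M i j = -((i : ℝ) + 1) * W i j) :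
    blockForm H M W ∈ g2P2e (n + 1) k := by
  set b := adaptedBasis (n + 1)
  set B := blockForm H M W
  have hB : ∀ a c, B (b a) (b c) = fromBlocks H M Mᵀ W a c := toLinearMap₂_apply_basis _ _ _
  refine ⟨fun X Y => ?_, fun X => ?_, fun X Y => ?_, fun j hj1 hjk X => ?_⟩
  · suffices B = B.flip from LinearMap.congr_fun₂ this X Y
    refine LinearMap.ext_basis b b fun a c => ?_
    rw [LinearMap.flip_apply, hB, hB]
    exact ((hH.fromBlocks rfl hW).apply a c).symm
  · suffices B.flip (Cvec (n + 1)) = 0 from LinearMap.congr_fun this X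
    refine b.ext fun a => ?_
    rw [Cvec_eq_adaptedBasis, LinearMap.flip_apply, hB, LinearMap.zero_apply]
    cases a <;> simp [hMC, hWC]
  · suffices B.compl₁₂ (Ph _) (Jmap _) = (B.compl₁₂ (Ph _) (Jmap _)).flip from
      LinearMap.congr_fun₂ this X Y
    refine LinearMap.ext_basis b b fun a c => ?_
    cases a <;> cases c <;> simp [b, B, hM.apply _ _]
  · obtain ⟨i, rfl⟩ : ∃ i : Fin (n + 1), (i : ℕ) + 1 = j := ⟨⟨j - 1, by omega⟩, by simp; omega⟩
    suffices B (ehat (n + 1) (i + 1)) = 0 from LinearMap.congr_fun this X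
    refine b.ext fun c => ?_
    rw [ehat_succ i (by omega), map_add, map_smul, LinearMap.add_apply, LinearMap.smul_apply,
      LinearMap.zero_apply]
    cases c <;> simp [b, B, hHrow i (by omega), hMrow i (by omega)] <;> ring

section Parametrization

variable {k m : ℕ}

local notation "𝔟" => adaptedBasis (k + (m + 1))

/-- Free entries of a form in `g2P2e (k + (m + 1)) k`, indexing basis vectors from `0`: indices
`p < k` belong to `ê_1, …, ê_k`, the others are `k + a` with `a ≤ m`, and `k + c` with `c < m`
are those other than the last one (the index of `C`). The five components are the entries
`A(h_{k+a}, h_{k+b})`, `A(h_{k+c}, v_{k+d})`, `A(v_{k+c}, v_{k+d})`, `A(v_p, v_{k+c})` and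
`A(v_p, v_p)`. -/
abbrev FreeData (k m : ℕ) : Type :=
  (Sym2 (Fin (m + 1)) → ℝ) × (Sym2 (Fin m) → ℝ) × (Sym2 (Fin m) → ℝ) × (Fin k × Fin m → ℝ) ×
    (Fin k → ℝ)

variable (k m) in
def freeEntries : Bil (k + (m + 1)) →ₗ[ℝ] FreeData k m where
  toFun A :=
    (fun z => A (𝔟 (.inl (Fin.natAdd k z.inf))) (𝔟 (.inl (Fin.natAdd k z.sup))),
      fun z => A (𝔟 (.inl (Fin.natAdd k z.inf.castSucc))) (𝔟 (.inr (Fin.natAdd k z.sup.castSucc))),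
      fun z => A (𝔟 (.inr (Fin.natAdd k z.inf.castSucc))) (𝔟 (.inr (Fin.natAdd k z.sup.castSucc))),
      fun pc => A (𝔟 (.inr (Fin.castAdd (m + 1) pc.1))) (𝔟 (.inr (Fin.natAdd k pc.2.castSucc))),
      fun p => A (𝔟 (.inr (Fin.castAdd (m + 1) p))) (𝔟 (.inr (Fin.castAdd (m + 1) p))))
  map_add' _ _ := rfl
  map_smul' _ _ := rfl

/- The rows `p < k` of `mMat` and `hMat` are dictated by
`A(h_{p+1}, ·) = -(p + 1) A(v_{p+1}, ·)`; every other entry is a free one or zero. -/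

def wMat (x : FreeData k m) : Matrix (Fin (k + (m + 1))) (Fin (k + (m + 1))) ℝ :=
  Fin.append
    (fun p => Fin.append (fun q => if p = q then x.2.2.2.2 p else 0)
      (fun b => Fin.lastCases 0 (fun d => x.2.2.2.1 (p, d)) b))
    (fun a => Fin.lastCases 0
      (fun c => Fin.append (fun q => x.2.2.2.1 (q, c))
        (fun b => Fin.lastCases 0 (fun d => x.2.2.1 s(c, d)) b)) a)

def mMat (x : FreeData k m) : Matrix (Fin (k + (m + 1))) (Fin (k + (m + 1))) ℝ :=
  Fin.append (fun p j => -((p : ℕ) + 1 : ℝ) * wMat x (Fin.castAdd (m + 1) p) j)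
    (fun a => Fin.append
      (fun q => -((q : ℕ) + 1 : ℝ) * wMat x (Fin.castAdd (m + 1) q) (Fin.natAdd k a))
      (fun b => Fin.lastCases 0 (fun c => Fin.lastCases 0 (fun d => x.2.1 s(c, d)) b) a))

def hMat (x : FreeData k m) : Matrix (Fin (k + (m + 1))) (Fin (k + (m + 1))) ℝ :=
  Fin.append (fun p j => -((p : ℕ) + 1 : ℝ) * mMat x j (Fin.castAdd (m + 1) p))
    (fun a => Fin.append
      (fun q => -((q : ℕ) + 1 : ℝ) * mMat x (Fin.natAdd k a) (Fin.castAdd (m + 1) q))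
      (fun b => x.1 s(a, b)))

def gramForm (x : FreeData k m) : Bil (k + (m + 1)) := blockForm (hMat x) (mMat x) (wMat x)

section GramForm

variable (x : FreeData k m)

lemma wMat_isSymm : (wMat x).IsSymm := by
  refine Matrix.IsSymm.ext fun i j => ?_
  induction i using Fin.cases_castAdd_castSucc_last <;>
    induction j using Fin.cases_castAdd_castSucc_last <;>
    simp [wMat, Sym2.eq_swap, eq_comm, -Fin.natAdd_last]
  split_ifs with h <;> simp [h]

lemma mMat_isSymm : (mMat x).IsSymm := by
  refine Matrix.IsSymm.ext fun i j => ?_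
  induction i using Fin.cases_castAdd_castSucc_last <;>
    induction j using Fin.cases_castAdd_castSucc_last <;>
    simp [mMat, wMat, Sym2.eq_swap, -Fin.natAdd_last]
  split_ifs <;> subst_vars <;> simp_all

lemma hMat_isSymm : (hMat x).IsSymm := by
  refine Matrix.IsSymm.ext fun i j => ?_
  induction i using Fin.cases_castAdd_castSucc_last <;>
    induction j using Fin.cases_castAdd_castSucc_last <;>
    simp [hMat, mMat, wMat, Sym2.eq_swap, -Fin.natAdd_last]
  split_ifs <;> subst_vars <;> simp_all

lemma wMat_last (i : Fin (k + (m + 1))) : wMat x i (Fin.last (k + m)) = 0 := by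
  rw [← Fin.natAdd_last]
  induction i using Fin.cases_castAdd_castSucc_last <;> simp [wMat, -Fin.natAdd_last]

lemma mMat_last (i : Fin (k + (m + 1))) : mMat x i (Fin.last (k + m)) = 0 := by
  rw [← Fin.natAdd_last]
  induction i using Fin.cases_castAdd_castSucc_last <;> simp [mMat, wMat, -Fin.natAdd_last]

lemma gramForm_mem_g2P2e : gramForm x ∈ g2P2e (k + (m + 1)) k := by
  refine blockForm_mem_g2P2e (n := k + m) (by omega) (hMat_isSymm x) (mMat_isSymm x)
    (wMat_isSymm x) (mMat_last x) (wMat_last x) (fun i hi j => ?_) (fun i hi j => ?_)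
  all_goals
    change Fin (k + (m + 1)) at i
    induction i using Fin.cases_castAdd_castSucc_last
    · simp [hMat, mMat]
    all_goals simp at hi

lemma freeEntries_gramForm : freeEntries k m (gramForm x) = x := by
  ext z <;>
    simp only [freeEntries, gramForm, LinearMap.coe_mk, AddHom.coe_mk, blockForm_inl_inl,
      blockForm_inl_inr, blockForm_inr_inr] <;>
    simp [hMat, mMat, wMat, Sym2.mk_inf_sup, -Fin.natAdd_last]

end GramForm

section FreeEntriesEqZero

variable {A : Bil (k + (m + 1))}

lemma apply_inr_natAdd_last (hA : A ∈ g2P2e (k + (m + 1)) k) (X : V (k + (m + 1))) :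
    A X (𝔟 (.inr (Fin.natAdd k (Fin.last m)))) = 0 := by
  rw [Fin.natAdd_last]
  exact apply_inr_last hA X

lemma apply_inr_inr_eq_zero_of_freeEntries_eq_zero (hA : A ∈ g2P2e (k + (m + 1)) k)
    (h0 : freeEntries k m A = 0) (i j : Fin (k + (m + 1))) :
    A (𝔟 (.inr i)) (𝔟 (.inr j)) = 0 := by
  have hlo : ∀ p j, A (𝔟 (.inr (Fin.castAdd (m + 1) p))) (𝔟 (.inr j)) = 0 := by
    intro p j
    induction j using Fin.cases_castAdd_castSucc_last with
    | lo q =>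
      rcases eq_or_ne p q with rfl | hpq
      · exact congr_fun (congr_arg (·.2.2.2.2) h0) p
      · exact apply_inr_inr_eq_zero hA (by simp) (by simp; omega) (by simp) (by simp; omega)
          (by simpa using hpq)
    | mid c => exact congr_fun (congr_arg (·.2.2.2.1) h0) (p, c)
    | top => exact apply_inr_natAdd_last hA _
  induction i using Fin.cases_castAdd_castSucc_last with
  | lo p => exact hlo p j
  | mid c =>
    induction j using Fin.cases_castAdd_castSucc_last with
    | lo q => rw [hA.1]; exact hlo q _
    | mid d =>
      exact Sym2.eq_zero_of_apply_inf_sup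
        (f := fun c d : Fin m =>
          A (𝔟 (.inr (Fin.natAdd k c.castSucc))) (𝔟 (.inr (Fin.natAdd k d.castSucc))))
        (fun _ _ => hA.1 _ _) (congr_fun (congr_arg (·.2.2.1) h0)) c d
    | top => exact apply_inr_natAdd_last hA _
  | top => rw [hA.1]; exact apply_inr_natAdd_last hA _

lemma apply_inl_inr_eq_zero_of_freeEntries_eq_zero (hA : A ∈ g2P2e (k + (m + 1)) k)
    (h0 : freeEntries k m A = 0) (i j : Fin (k + (m + 1))) :
    A (𝔟 (.inl i)) (𝔟 (.inr j)) = 0 := by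
  have hlo : ∀ p j, A (𝔟 (.inl (Fin.castAdd (m + 1) p))) (𝔟 (.inr j)) = 0 := by
    intro p j
    rw [apply_inl_eq hA (by simp) (by simp; omega),
      apply_inr_inr_eq_zero_of_freeEntries_eq_zero hA h0, mul_zero]
  induction j using Fin.cases_castAdd_castSucc_last with
  | lo q => rw [apply_inl_inr_comm hA]; exact hlo q i
  | mid d =>
    induction i using Fin.cases_castAdd_castSucc_last with
    | lo p => exact hlo p _
    | mid c =>
      exact Sym2.eq_zero_of_apply_inf_sup
        (f := fun c d : Fin m =>
          A (𝔟 (.inl (Fin.natAdd k c.castSucc))) (𝔟 (.inr (Fin.natAdd k d.castSucc))))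
        (fun _ _ => apply_inl_inr_comm hA _ _) (congr_fun (congr_arg (·.2.1) h0)) c d
    | top => rw [apply_inl_inr_comm hA]; exact apply_inr_natAdd_last hA _
  | top => exact apply_inr_natAdd_last hA _

lemma apply_inl_inl_eq_zero_of_freeEntries_eq_zero (hA : A ∈ g2P2e (k + (m + 1)) k)
    (h0 : freeEntries k m A = 0) (i j : Fin (k + (m + 1))) :
    A (𝔟 (.inl i)) (𝔟 (.inl j)) = 0 := by
  have hlo : ∀ p j, A (𝔟 (.inl (Fin.castAdd (m + 1) p))) (𝔟 (.inl j)) = 0 := by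
    intro p j
    rw [apply_inl_eq hA (by simp) (by simp; omega), hA.1,
      apply_inl_inr_eq_zero_of_freeEntries_eq_zero hA h0, mul_zero]
  induction i using Fin.addCases with
  | left p => exact hlo p j
  | right a =>
    induction j using Fin.addCases with
    | left q => rw [hA.1]; exact hlo q _
    | right b =>
      exact Sym2.eq_zero_of_apply_inf_sup
        (f := fun a b : Fin (m + 1) =>
          A (𝔟 (.inl (Fin.natAdd k a))) (𝔟 (.inl (Fin.natAdd k b))))
        (fun _ _ => hA.1 _ _) (congr_fun (congr_arg (·.1) h0)) a b

lemma eq_zero_of_freeEntries_eq_zero (hA : A ∈ g2P2e (k + (m + 1)) k)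
    (h0 : freeEntries k m A = 0) : A = 0 := by
  refine LinearMap.ext_basis 𝔟 𝔟 fun x y => ?_
  rcases x with i | i <;> rcases y with j | j
  · exact apply_inl_inl_eq_zero_of_freeEntries_eq_zero hA h0 i j
  · exact apply_inl_inr_eq_zero_of_freeEntries_eq_zero hA h0 i j
  · rw [hA.1]; exact apply_inl_inr_eq_zero_of_freeEntries_eq_zero hA h0 j i
  · exact apply_inr_inr_eq_zero_of_freeEntries_eq_zero hA h0 i j

end FreeEntriesEqZero

end Parametrization

section Dimension

variable (k m : ℕ)

lemma freeEntries_injOn : Set.InjOn (freeEntries k m) (g2P2e (k + (m + 1)) k) := by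
  intro A hA B hB hAB
  have h := eq_zero_of_freeEntries_eq_zero
    (add_mem hA (Submodule.smul_mem _ (-1) hB)) (by rw [map_add, map_smul, hAB]; module)
  rw [← sub_eq_zero]
  convert h using 1
  module

def freeEntriesEquiv : g2P2e (k + (m + 1)) k ≃ₗ[ℝ] FreeData k m :=
  LinearEquiv.ofBijective ((freeEntries k m).comp (g2P2e _ k).subtype) <| by
    refine ⟨fun A B hAB => Subtype.ext (freeEntries_injOn k m A.2 B.2 hAB), fun x => ?_⟩
    exact ⟨⟨gramForm x, gramForm_mem_g2P2e x⟩, freeEntries_gramForm x⟩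

lemma finrank_g2P2e_add :
    finrank ℝ (g2P2e (k + (m + 1)) k) = (m + 2).choose 2 + (k + m) * (m + 1) := by
  have h : (m + 1).choose 2 * 2 = (m + 1) * m := by
    rw [← Nat.add_one_mul_choose_eq, Nat.choose_one_right]
  rw [(freeEntriesEquiv k m).finrank_eq]
  simp only [finrank_prod, finrank_fintype_fun_eq_card, Sym2.card, Fintype.card_prod,
    Fintype.card_fin]
  linarith

end Dimension

lemma g2P2e_eq_bot {n k : ℕ} (hk : n + 1 ≤ k) : g2P2e (n + 1) k = ⊥ := by
  refine (Submodule.eq_bot_iff _).2 fun A hA => ?_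
  refine eq_zero_of_freeEntries_eq_zero (k := n) (m := 0) (g2P2e_antitone _ (by omega) hA) ?_
  ext z
  · simp only [freeEntries, LinearMap.coe_mk, AddHom.coe_mk]
    rw [Subsingleton.elim (α := Fin 1) z.inf (Fin.last 0),
      Subsingleton.elim (α := Fin 1) z.sup (Fin.last 0), Fin.natAdd_last]
    exact apply_inl_last_self_eq_zero hA hk
  · exact z.inf.elim0
  · exact z.inf.elim0
  · exact z.2.elim0
  · exact apply_inr_self_eq_zero hA hk _

theorem dim_g2P2e_general (n k : ℕ) (hn : 1 ≤ n) :
    Module.finrank ℝ (g2P2e n k) =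
      if k ≤ n then (n - k + 1) * (n - k) / 2 + (n - 1) * (n - k) else 0 := by
  rcases lt_or_ge k n with hkn | hnk
  · obtain ⟨m, rfl⟩ : ∃ m, n = k + (m + 1) := ⟨n - k - 1, by omega⟩
    rw [if_pos hkn.le, finrank_g2P2e_add, Nat.choose_two_right,
      show k + (m + 1) - k = m + 1 by omega, show k + (m + 1) - 1 = k + m by omega]
    rfl
  · obtain ⟨n, rfl⟩ : ∃ n', n = n' + 1 := ⟨n - 1, by omega⟩
    rw [g2P2e_eq_bot hnk, finrank_bot]
    split_ifs <;> simp [show n + 1 - k = 0 by omega]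

/-- for `1 ≤ k ≤ 2n` the subspace `g₂(P₂)_{ê₁…ê_k}` has dimension
`(n−k+1)(n−k)/2 + (n−1)(n−k)` if `k ≤ n`, and `0` if `k > n`. -/
theorem dim_g2P2e (n k : ℕ) (hn : 1 ≤ n) (hk1 : 1 ≤ k) (hk2 : k ≤ 2 * n) :
    Module.finrank ℝ (g2P2e n k) =
      if k ≤ n then (n - k + 1) * (n - k) / 2 + (n - 1) * (n - k) else 0 :=
  dim_g2P2e_general n k hn
end
end
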